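/- arXiv:math/0501182 — 2 statements merged into one kernel-verified Lean document; each statement's English description precedes it below -/
import Mathlib

section
/- Let Ψ : (0,∞) → ℝ be measurable with Ψ(ξ) > 0 for all ξ > 0, ∫₀^1 ξ²/Ψ(ξ) dξ < ∞ and ∫₁^∞ 1/Ψ(ξ) dξ < ∞. Then for every x ∈ ℝ and t > 0, lim_{p→0⁺} p ∫₀^∞ (1 − cos(ξx)·exp(−tΨ(ξ)))/(Ψ(ξ)(p + Ψ(ξ))) dξ = 0. -/
open MeasureTheory Filter Set

lemma aux_one_sub_cos_le (y : ℝ) : 1 - Real.cos y ≤ y ^ 2 / 2 := by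
  have h : Real.cos y = 2 * Real.cos (y / 2) ^ 2 - 1 := by
    rw [← Real.cos_two_mul]; ring_nf
  have h2 : Real.sin (y / 2) ^ 2 ≤ (y / 2) ^ 2 := Real.sin_sq_le_sq
  have h3 := Real.sin_sq_add_cos_sq (y / 2)
  nlinarith

lemma aux_one_sub_exp_le (a : ℝ) : 1 - Real.exp (-a) ≤ a := by
  have := Real.add_one_le_exp (-a)
  nlinarith

theorem tanaka_L1_convergence (Ψ : ℝ → ℝ) (hmeas : Measurable Ψ)
    (hpos : ∀ ξ ∈ Ioi (0:ℝ), 0 < Ψ ξ)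
    (h1 : IntegrableOn (fun ξ => ξ ^ 2 / Ψ ξ) (Ioc 0 1))
    (h2 : IntegrableOn (fun ξ => 1 / Ψ ξ) (Ioi 1)) (x t : ℝ) (ht : 0 < t) :
    Tendsto (fun p : ℝ =>
        p * ∫ ξ in Ioi (0:ℝ),
          (1 - Real.cos (ξ * x) * Real.exp (-t * Ψ ξ)) / (Ψ ξ * (p + Ψ ξ)))
      (nhdsWithin 0 (Ioi 0)) (nhds 0) := by
  have hrw : ∀ p : ℝ,
      p * ∫ ξ in Ioi (0:ℝ),
          (1 - Real.cos (ξ * x) * Real.exp (-t * Ψ ξ)) / (Ψ ξ * (p + Ψ ξ))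
      = ∫ ξ in Ioi (0:ℝ),
          p * ((1 - Real.cos (ξ * x) * Real.exp (-t * Ψ ξ)) / (Ψ ξ * (p + Ψ ξ))) := by
    intro p; rw [MeasureTheory.integral_const_mul]
  simp only [hrw]
  -- dominating function
  set B : ℝ → ℝ := fun ξ =>
    (Ioc (0:ℝ) 1).indicator (fun ξ => x ^ 2 / 2 * (ξ ^ 2 / Ψ ξ) + t) ξ +
    (Ioi (1:ℝ)).indicator (fun ξ => 2 * (1 / Ψ ξ)) ξ with hB
  have hBint : Integrable B (volume.restrict (Ioi (0:ℝ))) := by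
    apply Integrable.add
    · refine Integrable.restrict ?_
      exact MeasureTheory.IntegrableOn.integrable_indicator
        ((h1.const_mul (x ^ 2 / 2)).add
          (integrableOn_const measure_Ioc_lt_top.ne)) measurableSet_Ioc
    · exact (MeasureTheory.IntegrableOn.integrable_indicator
        (h2.const_mul 2) measurableSet_Ioi).restrict
  have key := MeasureTheory.tendsto_integral_filter_of_dominated_convergence
    (μ := volume.restrict (Ioi (0:ℝ))) (l := nhdsWithin (0:ℝ) (Ioi 0))
    (F := fun p ξ => p * ((1 - Real.cos (ξ * x) * Real.exp (-t * Ψ ξ)) / (Ψ ξ * (p + Ψ ξ))))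
    (f := fun _ => (0:ℝ)) B
    ?_ ?_ hBint ?_
  · simpa using key
  · refine Eventually.of_forall fun p => ?_
    apply Measurable.aestronglyMeasurable
    exact measurable_const.mul ((measurable_const.sub
      (((measurable_id.mul_const x).cos).mul ((hmeas.const_mul (-t)).exp))).div
      (hmeas.mul (measurable_const.add hmeas)))
  · filter_upwards [self_mem_nhdsWithin] with p (hp : p ∈ Ioi (0:ℝ))
    rw [ae_restrict_iff' measurableSet_Ioi]
    refine Eventually.of_forall fun ξ hξ => ?_
    have hP : 0 < Ψ ξ := hpos ξ hξ
    have hp' : (0:ℝ) < p := hp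
    have hg0 : 0 ≤ 1 - Real.cos (ξ * x) * Real.exp (-t * Ψ ξ) := by
      have h1 : Real.cos (ξ * x) ≤ 1 := Real.cos_le_one _
      have h2 : Real.exp (-t * Ψ ξ) ≤ 1 := by
        apply Real.exp_le_one_iff.mpr; nlinarith
      have h3 : -1 ≤ Real.cos (ξ * x) := Real.neg_one_le_cos _
      nlinarith [Real.exp_pos (-t * Ψ ξ)]
    have hdenom : 0 < Ψ ξ * (p + Ψ ξ) := by positivity
    have habs : |p * ((1 - Real.cos (ξ * x) * Real.exp (-t * Ψ ξ)) / (Ψ ξ * (p + Ψ ξ)))|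
        = p * ((1 - Real.cos (ξ * x) * Real.exp (-t * Ψ ξ)) / (Ψ ξ * (p + Ψ ξ))) := by
      apply abs_of_nonneg; positivity
    rw [Real.norm_eq_abs, habs]
    rcases le_or_gt ξ 1 with hle | hgt
    · have hmem : ξ ∈ Ioc (0:ℝ) 1 := ⟨hξ, hle⟩
      have hnm : ξ ∉ Ioi (1:ℝ) := by simp [not_lt.mpr hle]
      rw [hB]; simp only [indicator_of_mem hmem, indicator_of_notMem hnm, add_zero]
      -- g ≤ ξ²x²/2 + t * Ψ ξ
      have hgb : 1 - Real.cos (ξ * x) * Real.exp (-t * Ψ ξ)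
          ≤ (ξ * x) ^ 2 / 2 + t * Ψ ξ := by
        have hc := aux_one_sub_cos_le (ξ * x)
        have he := aux_one_sub_exp_le (t * Ψ ξ)
        have hc1 : Real.cos (ξ * x) ≤ 1 := Real.cos_le_one _
        have hc2 : -1 ≤ Real.cos (ξ * x) := Real.neg_one_le_cos _
        have he1 : Real.exp (-(t * Ψ ξ)) ≤ 1 := by
          apply Real.exp_le_one_iff.mpr; nlinarith
        have he0 : 0 < Real.exp (-(t * Ψ ξ)) := Real.exp_pos _
        rw [show -t * Ψ ξ = -(t * Ψ ξ) by ring]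
        nlinarith
      have step : p * ((1 - Real.cos (ξ * x) * Real.exp (-t * Ψ ξ)) / (Ψ ξ * (p + Ψ ξ)))
          ≤ ((ξ * x) ^ 2 / 2 + t * Ψ ξ) / Ψ ξ := by
        rw [mul_div_assoc', div_le_div_iff₀ hdenom hP]
        nlinarith [mul_le_mul_of_nonneg_right (mul_le_mul_of_nonneg_left hgb hp'.le) hP.le,
          mul_nonneg (mul_nonneg (by nlinarith [sq_nonneg (ξ * x)] :
            (0:ℝ) ≤ (ξ * x) ^ 2 / 2 + t * Ψ ξ) hP.le) hP.le]
      refine step.trans (le_of_eq ?_)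
      field_simp
    · have hmem : ξ ∈ Ioi (1:ℝ) := hgt
      have hnm : ξ ∉ Ioc (0:ℝ) 1 := by simp [not_le.mpr hgt]
      rw [hB]; simp only [indicator_of_mem hmem, indicator_of_notMem hnm, zero_add]
      have hg2 : 1 - Real.cos (ξ * x) * Real.exp (-t * Ψ ξ) ≤ 2 := by
        have hc2 : -1 ≤ Real.cos (ξ * x) := Real.neg_one_le_cos _
        have he1 : Real.exp (-t * Ψ ξ) ≤ 1 := by
          apply Real.exp_le_one_iff.mpr; nlinarith
        nlinarith [Real.exp_pos (-t * Ψ ξ)]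
      rw [show (2:ℝ) * (1 / Ψ ξ) = 2 / Ψ ξ by ring, mul_div_assoc',
        div_le_div_iff₀ hdenom hP]
      nlinarith [mul_le_mul_of_nonneg_right (mul_le_mul_of_nonneg_left hg2 hp'.le) hP.le,
        mul_pos hp' hP, mul_pos hP hP]
  · rw [ae_restrict_iff' measurableSet_Ioi]
    refine Eventually.of_forall fun ξ hξ => ?_
    have hP : 0 < Ψ ξ := hpos ξ hξ
    have hne : Ψ ξ * ((0:ℝ) + Ψ ξ) ≠ 0 := by positivity
    have hcont : Tendsto (fun p : ℝ =>
        p * ((1 - Real.cos (ξ * x) * Real.exp (-t * Ψ ξ)) / (Ψ ξ * (p + Ψ ξ))))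
        (nhds 0) (nhds (0 * ((1 - Real.cos (ξ * x) * Real.exp (-t * Ψ ξ)) /
          (Ψ ξ * ((0:ℝ) + Ψ ξ))))) := by
      apply Tendsto.mul tendsto_id
      apply Tendsto.div tendsto_const_nhds _ hne
      exact tendsto_const_nhds.mul (tendsto_id.add tendsto_const_nhds)
    have := hcont.mono_left (nhdsWithin_le_nhds (s := Ioi (0:ℝ)))
    simpa using this
end

section
/- Let α ∈ (1,2) and γ ∈ (0,1). Then for every a ∈ ℝ the function x ↦ (|a−x|^{α−1} − (a+x)^{α−1})/x^{α−γ} is absolutely integrable on (0,∞), the number q_{α,α−γ} := ∫₀^∞ (|1−x|^{α−1} − (1+x)^{α−1})/x^{α−γ} dx is finite, and ∫₀^∞ (|a−x|^{α−1} − |a+x|^{α−1})/x^{α−γ} dx = sgn(a)·|a|^γ·q_{α,α−γ}. -/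
open MeasureTheory Set Real

private lemma rpow_sub_le_rpow_sub' {u v β : ℝ} (hu : 0 ≤ u) (huv : u ≤ v)
    (hβ0 : 0 ≤ β) (hβ1 : β ≤ 1) : v ^ β - u ^ β ≤ (v - u) ^ β := by
  have hw : 0 ≤ v - u := sub_nonneg.2 huv
  have key := NNReal.rpow_add_le_add_rpow u.toNNReal (v - u).toNNReal hβ0 hβ1
  rw [← Real.toNNReal_add hu hw] at key
  have h := NNReal.coe_le_coe.2 key
  simp only [NNReal.coe_rpow, NNReal.coe_add,
    Real.coe_toNNReal _ (by linarith : (0:ℝ) ≤ u + (v - u)),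
    Real.coe_toNNReal _ hu, Real.coe_toNNReal _ hw] at h
  rw [show u + (v - u) = v by ring] at h
  linarith

private lemma abs_num_le' {β x : ℝ} (hβ0 : 0 ≤ β) (hβ1 : β ≤ 1) (hx : 0 < x) :
    |(|1 - x| ^ β - |1 + x| ^ β)| ≤ (2 * x) ^ β := by
  have h1 : |1 - x| ≤ 1 + x := by
    rw [abs_le]; constructor <;> linarith
  have h1' : |1 + x| = 1 + x := abs_of_pos (by linarith)
  have h2 : |1 - x| ^ β ≤ (1 + x) ^ β := Real.rpow_le_rpow (abs_nonneg _) h1 hβ0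
  rw [h1', abs_sub_comm, abs_of_nonneg (sub_nonneg.2 h2)]
  calc (1 + x) ^ β - |1 - x| ^ β ≤ (1 + x - |1 - x|) ^ β :=
        rpow_sub_le_rpow_sub' (abs_nonneg _) h1 hβ0 hβ1
    _ ≤ (2 * x) ^ β := by
        apply Real.rpow_le_rpow (sub_nonneg.2 h1) _ hβ0
        rcases abs_cases (1 - x) with ⟨h, h'⟩ | ⟨h, h'⟩ <;> rw [h] <;> linarith

private lemma num_le_large' {β x : ℝ} (hβ0 : 0 < β) (hβ1 : β ≤ 1) (hx : 2 < x) :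
    (1 + x) ^ β - (x - 1) ^ β ≤ 2 * β * (x - 1) ^ (β - 1) := by
  have hx1 : (0:ℝ) < x - 1 := by linarith
  have hb := rpow_one_add_le_one_add_mul_self (s := 2 / (x - 1)) (le_trans (by norm_num : (-1:ℝ) ≤ 0) (by positivity)) hβ0.le hβ1
  have hfac : 1 + x = (x - 1) * (1 + 2 / (x - 1)) := by field_simp; ring
  rw [hfac, Real.mul_rpow hx1.le (by positivity)]
  have hpow : (0:ℝ) ≤ (x - 1) ^ β := Real.rpow_nonneg hx1.le β
  have h3 : (x - 1) ^ β * (1 + 2 / (x - 1)) ^ β ≤ (x - 1) ^ β * (1 + β * (2 / (x - 1))) :=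
    mul_le_mul_of_nonneg_left hb hpow
  have h5 : (x - 1) ^ (β - 1) = (x - 1) ^ β / (x - 1) := Real.rpow_sub_one hx1.ne' β
  rw [h5]
  have h4 : (x - 1) ^ β * (1 + β * (2 / (x - 1))) - (x - 1) ^ β
      = 2 * β * ((x - 1) ^ β / (x - 1)) := by
    field_simp
    ring
  linarith

theorem symmetric_power_scaling (α γ : ℝ) (hα : α ∈ Ioo (1:ℝ) 2)
    (hγ : γ ∈ Ioo (0:ℝ) 1) :
    (∀ a : ℝ, IntegrableOn
        (fun x : ℝ => (|a - x| ^ (α - 1) - |a + x| ^ (α - 1)) / x ^ (α - γ))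
        (Ioi 0)) ∧
      IntegrableOn
        (fun x : ℝ => (|1 - x| ^ (α - 1) - (1 + x) ^ (α - 1)) / x ^ (α - γ))
        (Ioi 0) ∧
      ∀ a : ℝ,
        ∫ x in Ioi (0:ℝ),
            (|a - x| ^ (α - 1) - |a + x| ^ (α - 1)) / x ^ (α - γ) =
          Real.sign a * |a| ^ γ *
            ∫ x in Ioi (0:ℝ),
              (|1 - x| ^ (α - 1) - (1 + x) ^ (α - 1)) / x ^ (α - γ) := by
  obtain ⟨hα1, hα2⟩ := hα
  obtain ⟨hγ0, hγ1⟩ := hγ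
  have hβ0 : (0:ℝ) < α - 1 := by linarith
  have hβ1 : α - 1 ≤ 1 := by linarith
  -- continuity on (0, ∞)
  have cont : ∀ a : ℝ, ContinuousOn
      (fun x : ℝ => (|a - x| ^ (α - 1) - |a + x| ^ (α - 1)) / x ^ (α - γ)) (Ioi 0) := by
    intro a
    apply ContinuousOn.div
    · exact (((continuous_const.sub continuous_id).abs.rpow_const
        (fun x => Or.inr hβ0.le)).sub ((continuous_const.add continuous_id).abs.rpow_const
        (fun x => Or.inr hβ0.le))).continuousOn
    · exact (continuous_id.rpow_const fun x => Or.inr (by linarith)).continuousOn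
    · intro x hx
      exact (Real.rpow_pos_of_pos hx _).ne'
  -- integrability for a = 1
  have hI1 : IntegrableOn
      (fun x : ℝ => (|1 - x| ^ (α - 1) - |1 + x| ^ (α - 1)) / x ^ (α - γ)) (Ioi 0) := by
    rw [← Ioc_union_Ioi_eq_Ioi (by norm_num : (0:ℝ) ≤ 2)]
    apply IntegrableOn.union
    · -- on (0, 2]
      have hg : IntegrableOn (fun x : ℝ => 2 ^ (α - 1) * x ^ (γ - 1)) (Ioc 0 2) := by
        have h0 : IntegrableOn (fun x : ℝ => x ^ (γ - 1)) (Ioo 0 2) :=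
          (intervalIntegral.integrableOn_Ioo_rpow_iff two_pos).2 (by linarith)
        exact (h0.congr_set_ae Ioo_ae_eq_Ioc.symm).const_mul _
      apply hg.mono' (((cont 1).mono Ioc_subset_Ioi_self).aestronglyMeasurable measurableSet_Ioc)
      filter_upwards [ae_restrict_mem measurableSet_Ioc] with x hx
      have hx0 : 0 < x := hx.1
      rw [Real.norm_eq_abs, abs_div, abs_of_pos (Real.rpow_pos_of_pos hx0 _)]
      calc |(|1 - x| ^ (α - 1) - |1 + x| ^ (α - 1))| / x ^ (α - γ)
          ≤ (2 ^ (α - 1) * x ^ (α - 1)) / x ^ (α - γ) := by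
            gcongr
            rw [← Real.mul_rpow (by norm_num) hx0.le]
            exact abs_num_le' hβ0.le hβ1 hx0
        _ = 2 ^ (α - 1) * x ^ (γ - 1) := by
            rw [mul_div_assoc, ← Real.rpow_sub hx0, show α - 1 - (α - γ) = γ - 1 by ring]
    · -- on (2, ∞)
      have hg : IntegrableOn
          (fun x : ℝ => (2 * (α - 1) * ((2:ℝ) ^ (α - 2))⁻¹) * x ^ (γ - 2)) (Ioi 2) :=
        ((integrableOn_Ioi_rpow_iff two_pos).2 (by linarith)).const_mul _
      apply hg.mono' (((cont 1).mono (Ioi_subset_Ioi (by norm_num))).aestronglyMeasurable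
        measurableSet_Ioi)
      filter_upwards [ae_restrict_mem measurableSet_Ioi] with x hx
      have hx2 : (2:ℝ) < x := hx
      have hx0 : 0 < x := by linarith
      have h1 : |1 - x| = x - 1 := by rw [abs_of_nonpos (by linarith)]; ring
      have h1' : |1 + x| = 1 + x := abs_of_pos (by linarith)
      have hle : (x - 1 : ℝ) ^ (α - 1) ≤ (1 + x) ^ (α - 1) :=
        Real.rpow_le_rpow (by linarith) (by linarith) hβ0.le
      rw [Real.norm_eq_abs, abs_div, abs_of_pos (Real.rpow_pos_of_pos hx0 _), h1, h1',
        abs_sub_comm, abs_of_nonneg (sub_nonneg.2 hle)]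
      have hmono : (x - 1 : ℝ) ^ (α - 1 - 1) ≤ (x / 2) ^ (α - 1 - 1) :=
        Real.rpow_le_rpow_of_nonpos (by linarith) (by linarith) (by linarith)
      calc ((1 + x) ^ (α - 1) - (x - 1) ^ (α - 1)) / x ^ (α - γ)
          ≤ (2 * (α - 1) * (x - 1) ^ (α - 1 - 1)) / x ^ (α - γ) := by
            gcongr
            exact num_le_large' hβ0 hβ1 hx2
        _ ≤ (2 * (α - 1) * (x / 2) ^ (α - 1 - 1)) / x ^ (α - γ) := by
            gcongr
        _ = (2 * (α - 1) * ((2:ℝ) ^ (α - 2))⁻¹) * x ^ (γ - 2) := by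
            rw [show α - 1 - 1 = α - 2 by ring,
              Real.div_rpow hx0.le (by norm_num : (0:ℝ) ≤ 2)]
            have hxs : x ^ (α - 2) = x ^ (γ - 2) * x ^ (α - γ) := by
              rw [← Real.rpow_add hx0]; congr 1; ring
            have h2ne := (Real.rpow_pos_of_pos (by norm_num : (0:ℝ) < 2) (α - 2)).ne'
            have hxne := (Real.rpow_pos_of_pos hx0 (α - γ)).ne'
            rw [hxs]
            field_simp
  -- the q-integrand agrees with F 1 on (0, ∞)
  have hEq1 : EqOn (fun x : ℝ => (|1 - x| ^ (α - 1) - |1 + x| ^ (α - 1)) / x ^ (α - γ))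
      (fun x : ℝ => (|1 - x| ^ (α - 1) - (1 + x) ^ (α - 1)) / x ^ (α - γ)) (Ioi 0) := by
    intro x hx
    have : |1 + x| = 1 + x := abs_of_pos (by linarith [mem_Ioi.1 hx])
    simp only [this]
  have hIq : IntegrableOn
      (fun x : ℝ => (|1 - x| ^ (α - 1) - (1 + x) ^ (α - 1)) / x ^ (α - γ)) (Ioi 0) :=
    hI1.congr_fun hEq1 measurableSet_Ioi
  have hq_eq : (∫ x in Ioi (0:ℝ), (|1 - x| ^ (α - 1) - |1 + x| ^ (α - 1)) / x ^ (α - γ)) =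
      ∫ x in Ioi (0:ℝ), (|1 - x| ^ (α - 1) - (1 + x) ^ (α - 1)) / x ^ (α - γ) :=
    setIntegral_congr_fun measurableSet_Ioi hEq1
  -- scaling for positive a
  have hpos : ∀ a : ℝ, 0 < a →
      IntegrableOn (fun x : ℝ => (|a - x| ^ (α - 1) - |a + x| ^ (α - 1)) / x ^ (α - γ)) (Ioi 0) ∧
      (∫ x in Ioi (0:ℝ), (|a - x| ^ (α - 1) - |a + x| ^ (α - 1)) / x ^ (α - γ)) =
        a ^ γ * ∫ x in Ioi (0:ℝ), (|1 - x| ^ (α - 1) - |1 + x| ^ (α - 1)) / x ^ (α - γ) := by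
    intro a ha
    have hainv : (0:ℝ) < a⁻¹ := inv_pos.2 ha
    have hEqa : EqOn
        (fun x : ℝ => a ^ (γ - 1) *
          ((|1 - x * a⁻¹| ^ (α - 1) - |1 + x * a⁻¹| ^ (α - 1)) / (x * a⁻¹) ^ (α - γ)))
        (fun x : ℝ => (|a - x| ^ (α - 1) - |a + x| ^ (α - 1)) / x ^ (α - γ)) (Ioi 0) := by
      intro x hx
      have hx0 : (0:ℝ) < x := mem_Ioi.1 hx
      have e1 : (1:ℝ) - x * a⁻¹ = (a - x) * a⁻¹ := by field_simp
      have e2 : (1:ℝ) + x * a⁻¹ = (a + x) * a⁻¹ := by field_simp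
      have einv : |a⁻¹| = a⁻¹ := abs_of_pos hainv
      simp only [e1, e2, abs_mul, einv,
        Real.mul_rpow (abs_nonneg _) hainv.le, Real.mul_rpow hx0.le hainv.le,
        Real.inv_rpow ha.le]
      have hrel : a ^ (γ - 1) * a ^ (α - γ) = a ^ (α - 1) := by
        rw [← Real.rpow_add ha]; congr 1; ring
      have hane := (Real.rpow_pos_of_pos ha (α - 1)).ne'
      have hane2 := (Real.rpow_pos_of_pos ha (α - γ)).ne'
      have hxne := (Real.rpow_pos_of_pos hx0 (α - γ)).ne'
      field_simp
      linear_combination (|a - x| ^ (α - 1) - |a + x| ^ (α - 1)) * hrel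
    have hcomp : IntegrableOn
        (fun x : ℝ => (|1 - x * a⁻¹| ^ (α - 1) - |1 + x * a⁻¹| ^ (α - 1)) / (x * a⁻¹) ^ (α - γ))
        (Ioi 0) := by
      have := (integrableOn_Ioi_comp_mul_right_iff
        (fun x : ℝ => (|1 - x| ^ (α - 1) - |1 + x| ^ (α - 1)) / x ^ (α - γ)) 0 hainv).2
      simpa using this (by simpa using hI1)
    refine ⟨MeasureTheory.IntegrableOn.congr_fun (hcomp.const_mul (a ^ (γ - 1))) hEqa measurableSet_Ioi, ?_⟩
    rw [← setIntegral_congr_fun measurableSet_Ioi hEqa, integral_const_mul,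
      integral_comp_mul_right_Ioi
        (fun x : ℝ => (|1 - x| ^ (α - 1) - |1 + x| ^ (α - 1)) / x ^ (α - γ)) 0 hainv]
    simp only [zero_mul, inv_inv, smul_eq_mul]
    rw [← mul_assoc, show a ^ (γ - 1) * a = a ^ γ by
      rw [← Real.rpow_add_one ha.ne' (γ - 1), show γ - 1 + 1 = γ by ring]]
  -- a = 0 gives the zero function
  have hzero : (fun x : ℝ => (|(0:ℝ) - x| ^ (α - 1) - |(0:ℝ) + x| ^ (α - 1)) / x ^ (α - γ))
      = fun _ => (0:ℝ) := by
    funext x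
    rw [zero_sub, zero_add, abs_neg]
    ring
  -- negation
  have hneg : ∀ a : ℝ, (fun x : ℝ => (|a - x| ^ (α - 1) - |a + x| ^ (α - 1)) / x ^ (α - γ))
      = fun x : ℝ => -((|(-a) - x| ^ (α - 1) - |(-a) + x| ^ (α - 1)) / x ^ (α - γ)) := by
    intro a
    funext x
    rw [show a - x = -((-a) + x) by ring, show a + x = -((-a) - x) by ring, abs_neg, abs_neg]
    ring
  have hint : ∀ a : ℝ, IntegrableOn
      (fun x : ℝ => (|a - x| ^ (α - 1) - |a + x| ^ (α - 1)) / x ^ (α - γ)) (Ioi 0) := by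
    intro a
    rcases lt_trichotomy a 0 with h | h | h
    · rw [hneg a]
      exact ((hpos (-a) (by linarith)).1).neg
    · subst h
      rw [hzero]
      exact integrableOn_zero
    · exact (hpos a h).1
  refine ⟨hint, hIq, ?_⟩
  intro a
  rcases lt_trichotomy a 0 with h | h | h
  · rw [hneg a, integral_neg, (hpos (-a) (by linarith)).2, hq_eq,
      Real.sign_of_neg h, abs_of_neg h]
    ring
  · subst h
    rw [hzero]
    simp [Real.sign_zero]
  · rw [(hpos a h).2, hq_eq, Real.sign_of_pos h, abs_of_pos h]
    ring
end
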